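/- arXiv:2306.00420 — 2 statements merged into one kernel-verified Lean document; each statement's English description precedes it below -/
import Mathlib

section
/- Let X be a finite set of assignments over domain D, 𝕏 : X → [0,1] a probability distribution, x a fresh variable, and F : X → (A → [0,1]) a family of distributions over a finite set A. Suppose that in the extended team 𝕐 = 𝕏(F/x), the variable x is probabilistically independent of the tuple of all variables in D, i.e., for all s ∈ X and a ∈ A: |𝕐_{D=s, x=a}| = |𝕐_{D=s}| · |𝕐_{x=a}|. Then there exists a single distribution d : A → [0,1] such that 𝕏(F/x) = 𝕏(d/x), i.e., 𝕐(s(a/x)) = 𝕏(s) · d(a) for all s ∈ X with 𝕏(s) > 0 and all a ∈ A. -/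
/-- If in the extension `𝕐(s,a) = 𝕏(s)·F(s)(a)` the fresh variable `x` is
probabilistically independent of all old variables, then the extension is by a
single fixed distribution `d` on the support of `𝕏`. -/
theorem independent_fresh_extension_is_fixed {D A : Type*} [Fintype D] [DecidableEq D] [Fintype A]
    (𝕏 : (D → A) → ℝ) (F : (D → A) → A → ℝ)
    (h𝕏 : ∀ s, 𝕏 s ∈ Set.Icc (0 : ℝ) 1) (h𝕏sum : ∑ s, 𝕏 s = 1)
    (hF : ∀ s a, F s a ∈ Set.Icc (0 : ℝ) 1) (hFsum : ∀ s, ∑ a, F s a = 1)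
    (hindep : ∀ (s : D → A) (a : A),
      𝕏 s * F s a = (∑ a' : A, 𝕏 s * F s a') * (∑ s' : D → A, 𝕏 s' * F s' a)) :
    ∃ d : A → ℝ, (∀ a, d a ∈ Set.Icc (0 : ℝ) 1) ∧ ∑ a, d a = 1 ∧
      ∀ s : D → A, 0 < 𝕏 s → ∀ a : A, 𝕏 s * F s a = 𝕏 s * d a := by
  refine ⟨fun a => ∑ s', 𝕏 s' * F s' a, ?_, ?_, ?_⟩
  · intro a
    constructor
    · exact Finset.sum_nonneg fun s _ =>
        mul_nonneg (h𝕏 s).1 (hF s a).1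
    · calc ∑ s', 𝕏 s' * F s' a ≤ ∑ s', 𝕏 s' * 1 :=
            Finset.sum_le_sum fun s _ => mul_le_mul_of_nonneg_left (hF s a).2 (h𝕏 s).1
        _ = 1 := by simp [h𝕏sum]
  · rw [Finset.sum_comm]
    calc ∑ s', ∑ a, 𝕏 s' * F s' a = ∑ s', 𝕏 s' * ∑ a, F s' a := by
          simp [Finset.mul_sum]
      _ = 1 := by simp [hFsum, h𝕏sum]
  · intro s _ a
    have h := hindep s a
    rwa [← Finset.mul_sum, hFsum, mul_one] at h
end

section
/- Let A be a finite set, k = |𝕫|, and 𝕏 a probability distribution over assignments of variables 𝕩𝕪𝕫 with values in A. Define the conditional independence condition CI: for all tuples a over Var(𝕩𝕪𝕫), |𝕏_{𝕩𝕪=a(𝕩𝕪)}| · |𝕏_{𝕩𝕫=a(𝕩𝕫)}| = |𝕏_{𝕩𝕪𝕫=a(𝕩𝕪𝕫)}| · |𝕏_{𝕩=a(𝕩)}|, where 𝕩,𝕪,𝕫 are disjoint tuples of variables. If 𝕪 = 𝕫 (the atom y ⊥⊥_x y), then CI holds if and only if for every value b of 𝕩𝕪 with |𝕏_{𝕩𝕪=b}|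 > 0 we have |𝕏_{𝕩𝕪=b}| = |𝕏_{𝕩=b(𝕩)}|; equivalently, 𝕪 is functionally determined by 𝕩 on the support of 𝕏. -/
/-- For a distribution `𝕏` over values of the tuples `x` (in `Vx`) and `y` (in `Vy`),
the self-independence atom `y ⊥⊥_x y` holds iff every supported value of `xy` has the
same weight as its `x`-part, iff `y` is functionally determined by `x` on the support. -/
theorem self_independence_iff_functional_dependence {Vx Vy : Type*}
    [Fintype Vx] [Fintype Vy]
    (𝕏 : Vx × Vy → ℝ) (h𝕏 : ∀ b, 0 ≤ 𝕏 b) (hsum : ∑ b, 𝕏 b = 1) :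
    ((∀ b : Vx × Vy, 𝕏 b * 𝕏 b = 𝕏 b * ∑ b' : Vy, 𝕏 (b.1, b')) ↔
        ∀ b : Vx × Vy, 0 < 𝕏 b → 𝕏 b = ∑ b' : Vy, 𝕏 (b.1, b')) ∧
      ((∀ b : Vx × Vy, 0 < 𝕏 b → 𝕏 b = ∑ b' : Vy, 𝕏 (b.1, b')) ↔
        ∀ b b' : Vx × Vy, 0 < 𝕏 b → 0 < 𝕏 b' → b.1 = b'.1 → b.2 = b'.2) := by
  classical
  constructor
  · constructor
    · intro h b hb
      exact mul_left_cancel₀ (ne_of_gt hb) (h b)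
    · intro h b
      rcases (h𝕏 b).lt_or_eq with hb | hb
      · rw [h b hb]
      · rw [← hb]; ring
  · constructor
    · intro h b b' hb hb' h1
      by_contra hne
      have key : 𝕏 b + 𝕏 b' ≤ ∑ y : Vy, 𝕏 (b.1, y) := by
        have : ({b.2, b'.2} : Finset Vy).sum (fun y => 𝕏 (b.1, y)) ≤
            ∑ y : Vy, 𝕏 (b.1, y) :=
          Finset.sum_le_sum_of_subset_of_nonneg (Finset.subset_univ _)
            (fun i _ _ => h𝕏 _)
        rwa [Finset.sum_pair hne, show (b.1, b.2) = b from rfl,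
          show (b.1, b'.2) = b' by rw [h1]] at this
      have := h b hb
      linarith
    · intro h b hb
      rw [show (∑ y : Vy, 𝕏 (b.1, y)) = 𝕏 b from ?_]
      refine Finset.sum_eq_single b.2 (fun y _ hy => ?_) (by simp)
      rcases (h𝕏 (b.1, y)).lt_or_eq with hpos | h0
      · exact absurd (h _ b hpos hb rfl) hy
      · exact h0.symm
end
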